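/- Let K, M, M' be N×N complex matrices, a ∈ ℂ, and r, r', c ∈ ℂ^N column vectors. Suppose: (i) K·M + M·K = r·cᵀ; (ii) K·M' + M'·K = r'·cᵀ; (iii) (a·I − K)·r' = (a·I + K)·r; and (iv) the only N×N matrix X with K·X + X·K = 0 is X = 0. Then (a·I − K)·M' − M·(a·I − K) = r·cᵀ. -/
import Mathlib


open Matrix

lemma mul_vecMulVec' {N : ℕ} (A : Matrix (Fin N) (Fin N) ℂ) (u v : Fin N → ℂ) :
    A * vecMulVec u v = vecMulVec (A.mulVec u) v := by
  ext i j
  simp [mul_apply, vecMulVec_apply, mulVec, dotProduct, Finset.sum_mul, mul_assoc]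

theorem stmt11 (N : ℕ) (K M M' : Matrix (Fin N) (Fin N) ℂ) (a : ℂ)
    (r r' c : Fin N → ℂ)
    (h1 : K * M + M * K = vecMulVec r c)
    (h2 : K * M' + M' * K = vecMulVec r' c)
    (h3 : (a • (1 : Matrix (Fin N) (Fin N) ℂ) - K).mulVec r' = (a • 1 + K).mulVec r)
    (h4 : ∀ X : Matrix (Fin N) (Fin N) ℂ, K * X + X * K = 0 → X = 0) :
    (a • (1 : Matrix (Fin N) (Fin N) ℂ) - K) * M' - M * (a • 1 - K) = vecMulVec r c := by
  set A : Matrix (Fin N) (Fin N) ℂ := a • (1 : Matrix (Fin N) (Fin N) ℂ) - K with hA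
  have hcomm : K * A = A * K := by
    simp [hA, Matrix.mul_sub, Matrix.sub_mul, Matrix.mul_smul, Matrix.smul_mul]
  have key : K * (A * M' - M * A - vecMulVec r c)
      + (A * M' - M * A - vecMulVec r c) * K = 0 := by
    have e1 : K * (A * M') + (A * M') * K = A * vecMulVec r' c := by
      rw [← Matrix.mul_assoc, hcomm, Matrix.mul_assoc, Matrix.mul_assoc,
        ← Matrix.mul_add, h2]
    have e2 : K * (M * A) + (M * A) * K = vecMulVec r c * A := by
      rw [Matrix.mul_assoc, ← hcomm, ← Matrix.mul_assoc, ← Matrix.mul_assoc,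
        ← Matrix.add_mul, h1]
    have e3 : A * vecMulVec r' c
        - (vecMulVec r c * A + (K * vecMulVec r c + vecMulVec r c * K)) = 0 := by
      have h4' : A * vecMulVec r' c = vecMulVec ((a • 1 + K).mulVec r) c := by
        rw [mul_vecMulVec', h3]
      have h5 : vecMulVec ((a • (1:Matrix (Fin N) (Fin N) ℂ) + K).mulVec r) c
          = (a • 1 + K) * vecMulVec r c := by rw [mul_vecMulVec']
      rw [h4', h5]
      have : vecMulVec r c * A = a • vecMulVec r c - vecMulVec r c * K := by
        simp [hA, Matrix.mul_sub, Matrix.mul_smul]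
      rw [this]
      simp [Matrix.add_mul, Matrix.smul_mul]
    calc K * (A * M' - M * A - vecMulVec r c)
        + (A * M' - M * A - vecMulVec r c) * K
        = (K * (A * M') + (A * M') * K) - (K * (M * A) + (M * A) * K)
          - (K * vecMulVec r c + vecMulVec r c * K) := by
          simp only [Matrix.mul_sub, Matrix.sub_mul]; abel
      _ = A * vecMulVec r' c - (vecMulVec r c * A
            + (K * vecMulVec r c + vecMulVec r c * K)) := by rw [e1, e2]; abel
      _ = 0 := e3
  exact sub_eq_zero.mp (h4 _ key)
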